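/- Let the fundamental graph data with a set S be given, let Q : V* → ℝ be a potential, and let α, α° : A* → ℝ be two 1-forms both vanishing outside S ∪ S̄. Set C = 2 · max_{u∈V*} Σ_{e ∈ S∪S̄, o(e)=u} |sin((α°(e) − α(e))/2)|. Then for every n ∈ {1,…,ν} the lengths of the n-th spectral bands satisfy | |σ_n(H_{α°})| − |σ_n(H_α)| | ≤ 2C, where |σ_n(H_α)| = sup_θ λ_{α,n}(θ) − inf_θ λ_{α,n}(θ). -/

import Mathlib

open scoped BigOperators
open Matrix Polynomial

noncomputable section

/-- Phase `α(e) + ⟨τ(e), θ⟩` of an edge. -/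
def edgePhase {E : Type*} {d : ℕ} (α : E → ℝ) (τ : E → Fin d → ℤ)
    (θ : Fin d → ℝ) (e : E) : ℝ :=
  α e + ∑ j, (τ e j : ℝ) * θ j

/-- Degree of a vertex: the number of oriented edges starting at it. -/
def vertexDeg {E : Type*} [Fintype E] {ν : ℕ} (o : E → Fin ν) (v : Fin ν) : ℕ :=
  (Finset.univ.filter fun e => o e = v).card

/-- The fiber magnetic Laplacian `Δ_α(θ)` as a `ν × ν` complex matrix. -/
def fiberLap {E : Type*} [Fintype E] {d ν : ℕ} (o t : E → Fin ν)
    (τ : E → Fin d → ℤ) (α : E → ℝ) (θ : Fin d → ℝ) : Matrix (Fin ν) (Fin ν) ℂ :=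
  fun v u => (vertexDeg o v : ℂ) * (if v = u then 1 else 0)
    - ∑ e ∈ Finset.univ.filter (fun e => o e = v ∧ t e = u),
        Complex.exp (Complex.I * (edgePhase α τ θ e : ℝ))

/-- The fiber magnetic Schrödinger operator `H_α(θ) = Δ_α(θ) + diag Q`. -/
def fiberSch {E : Type*} [Fintype E] {d ν : ℕ} (o t : E → Fin ν)
    (τ : E → Fin d → ℤ) (α : E → ℝ) (Q : Fin ν → ℝ) (θ : Fin d → ℝ) :
    Matrix (Fin ν) (Fin ν) ℂ :=
  fiberLap o t τ α θ + Matrix.diagonal (fun v => (Q v : ℂ))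

/-!
On each fiber, `H_{α°}(θ) - H_α(θ)` only differs from zero on the edges of `S ∪ S̄`, where its
entries are sums of `e^{iφ} - e^{iφ'}` of modulus `2 |sin ((α°(e) - α(e)) / 2)|`. The Schur test
bounds its quadratic form by `C ‖x‖²`, and Weyl's inequality (via the dimension count of the
min-max principle) turns this into `|λ_{α°,n}(θ) - λ_{α,n}(θ)| ≤ C` for every `θ`. Hence both the
top and the bottom of the `n`-th band move by at most `C`. That these suprema and infima are
finite follows from the same estimate, comparing `H_α(θ)` with `H_α(0)`.
-/

open Finset

lemma Monotone.le_iff_lt_card_filter_le {α : Type*} [Preorder α] [DecidableLE α] {ν : ℕ}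
    {f : Fin ν → α} (hf : Monotone f) (k : Fin ν) (μ : α) :
    f k ≤ μ ↔ (k : ℕ) < #{i | f i ≤ μ} := by
  constructor
  · intro hk
    have hsub : Iic k ⊆ ({i | f i ≤ μ} : Finset (Fin ν)) := fun i hi =>
      mem_filter.mpr ⟨mem_univ i, (hf (mem_Iic.mp hi)).trans hk⟩
    simpa using card_le_card hsub
  · intro hk
    by_contra hkμ
    have hsub : ({i | f i ≤ μ} : Finset (Fin ν)) ⊆ Iio k := fun i hi =>
      mem_Iio.mpr (not_le.mp fun hki => hkμ ((hf hki).trans (mem_filter.mp hi).2))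
    simpa using (card_le_card hsub).trans_lt' hk

lemma Submodule.exists_mem_inf_ne_zero_of_finrank_lt {K V : Type*} [DivisionRing K]
    [AddCommGroup V] [Module K V] [FiniteDimensional K V] {s t : Submodule K V}
    (h : Module.finrank K V < Module.finrank K s + Module.finrank K t) :
    ∃ x ∈ s ⊓ t, x ≠ 0 := by
  refine Submodule.exists_mem_ne_zero_of_ne_bot (Submodule.one_le_finrank_iff.mp ?_)
  have := Submodule.finrank_sup_add_finrank_inf_eq s t
  have := Submodule.finrank_le (s ⊔ t)
  omega

lemma Complex.norm_exp_I_mul_ofReal_sub_exp_I_mul_ofReal (a b : ℝ) :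
    ‖Complex.exp (Complex.I * a) - Complex.exp (Complex.I * b)‖
      = 2 * |Real.sin ((a - b) / 2)| := by
  have hfac : Complex.exp (Complex.I * a) - Complex.exp (Complex.I * b)
      = Complex.exp (Complex.I * b) * (Complex.exp (Complex.I * (a - b : ℝ)) - 1) := by
    rw [mul_sub, mul_one, ← Complex.exp_add]
    push_cast
    ring_nf
  rw [hfac, norm_mul, Complex.norm_exp_I_mul_ofReal, one_mul,
    Complex.norm_exp_I_mul_ofReal_sub_one, norm_mul, Real.norm_ofNat, Real.norm_eq_abs]

lemma abs_ciSup_sub_ciInf_sub_le {ι : Type*} [Nonempty ι] {f g : ι → ℝ} {c : ℝ}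
    (hg : Bornology.IsBounded (Set.range g)) (h : ∀ i, |f i - g i| ≤ c) :
    |((⨆ i, f i) - ⨅ i, f i) - ((⨆ i, g i) - ⨅ i, g i)| ≤ 2 * c := by
  obtain ⟨hg₀, hg₁⟩ := isBounded_iff_bddBelow_bddAbove.mp hg
  have hf₁ : BddAbove (Set.range f) := by
    obtain ⟨M, hM⟩ := hg₁
    exact ⟨M + c, Set.forall_mem_range.mpr fun i =>
      by linarith [(abs_le.mp (h i)).2, hM (Set.mem_range_self i)]⟩
  have hf₀ : BddBelow (Set.range f) := by
    obtain ⟨M, hM⟩ := hg₀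
    exact ⟨M - c, Set.forall_mem_range.mpr fun i =>
      by linarith [(abs_le.mp (h i)).1, hM (Set.mem_range_self i)]⟩
  have h₁ : (⨆ i, f i) ≤ (⨆ i, g i) + c := ciSup_le fun i =>
    by linarith [(abs_le.mp (h i)).2, le_ciSup hg₁ i]
  have h₂ : (⨆ i, g i) ≤ (⨆ i, f i) + c := ciSup_le fun i =>
    by linarith [(abs_le.mp (h i)).1, le_ciSup hf₁ i]
  have h₃ : (⨅ i, g i) - c ≤ ⨅ i, f i := le_ciInf fun i =>
    by linarith [(abs_le.mp (h i)).1, ciInf_le hg₀ i]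
  have h₄ : (⨅ i, f i) - c ≤ ⨅ i, g i := le_ciInf fun i =>
    by linarith [(abs_le.mp (h i)).2, ciInf_le hf₀ i]
  rw [abs_le]
  constructor <;> linarith

section Spectral

open RCLike

variable {𝕜 n : Type*} [RCLike 𝕜] [Fintype n]

local notation "⟪" x ", " y "⟫" => @inner 𝕜 _ _ x y

namespace OrthonormalBasis

variable {E : Type*} [NormedAddCommGroup E] [InnerProductSpace 𝕜 E] (b : OrthonormalBasis n 𝕜 E)

lemma inner_eq_zero_of_mem_span {s : Set n} {x : E}
    (hx : x ∈ Submodule.span 𝕜 (b '' s)) {j : n} (hj : j ∉ s) : ⟪b j, x⟫ = 0 := by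
  induction hx using Submodule.span_induction with
  | mem y hy =>
    obtain ⟨i, hi, rfl⟩ := hy
    exact b.orthonormal.2 fun h => hj (h ▸ hi)
  | zero => exact inner_zero_right _
  | add y z _ _ hy hz => rw [inner_add_right, hy, hz, add_zero]
  | smul c y _ hy => rw [inner_smul_right, hy, mul_zero]

lemma finrank_span_image (s : Finset n) :
    Module.finrank 𝕜 (Submodule.span 𝕜 (b '' s)) = #s := by
  rw [Set.image_eq_range, finrank_span_eq_card (b := fun i : (s : Set n) => b i)
    (b.orthonormal.comp _ Subtype.val_injective).linearIndependent]
  simp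

end OrthonormalBasis

variable [DecidableEq n]

/-- The Schur test, for the quadratic form. -/
lemma Matrix.norm_inner_toEuclideanLin_le {D : Matrix n n 𝕜} {K : n → n → ℝ} {R : ℝ}
    (hD : ∀ v u, ‖D v u‖ ≤ K v u) (hrow : ∀ v, ∑ u, K v u ≤ R) (hcol : ∀ u, ∑ v, K v u ≤ R)
    (x : EuclideanSpace 𝕜 n) :
    ‖⟪x, Matrix.toEuclideanLin D x⟫‖ ≤ R * ‖x‖ ^ 2 := by
  have hx : ‖x‖ ^ 2 = ∑ v, ‖x v‖ ^ 2 := PiLp.norm_sq_eq_of_L2 _ x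
  have hamgm (v u : n) : K v u * (‖x v‖ * ‖x u‖) ≤ K v u * ((‖x v‖ ^ 2 + ‖x u‖ ^ 2) / 2) :=
    mul_le_mul_of_nonneg_left (by nlinarith [sq_nonneg (‖x v‖ - ‖x u‖)])
      ((norm_nonneg _).trans (hD v u))
  have hswap : ∑ u, (∑ v, K v u) * ‖x u‖ ^ 2 = ∑ v, ∑ u, K v u * ‖x u‖ ^ 2 := by
    simp only [sum_mul]
    exact sum_comm
  calc ‖⟪x, Matrix.toEuclideanLin D x⟫‖
      = ‖∑ v, ∑ u, D v u * x u * star (x v)‖ := by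
        simp [EuclideanSpace.inner_eq_star_dotProduct, Matrix.toLpLin_apply, dotProduct,
          Matrix.mulVec, sum_mul]
    _ ≤ ∑ v, ∑ u, K v u * (‖x v‖ * ‖x u‖) := by
        refine (norm_sum_le _ _).trans (sum_le_sum fun v _ => (norm_sum_le _ _).trans
          (sum_le_sum fun u _ => ?_))
        rw [norm_mul, norm_mul, norm_star, mul_assoc, mul_comm ‖x u‖]
        exact mul_le_mul_of_nonneg_right (hD v u) (by positivity)
    _ ≤ ∑ v, ∑ u, K v u * ((‖x v‖ ^ 2 + ‖x u‖ ^ 2) / 2) :=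
        sum_le_sum fun v _ => sum_le_sum fun u _ => hamgm v u
    _ = ((∑ v, (∑ u, K v u) * ‖x v‖ ^ 2) + ∑ u, (∑ v, K v u) * ‖x u‖ ^ 2) / 2 := by
        rw [hswap]
        simp only [sum_mul, ← sum_add_distrib, sum_div]
        refine sum_congr rfl fun v _ => sum_congr rfl fun u _ => ?_
        ring
    _ ≤ ((∑ v, R * ‖x v‖ ^ 2) + ∑ u, R * ‖x u‖ ^ 2) / 2 := by
        gcongr with v _ u _
        · exact hrow v
        · exact hcol u
    _ = R * ‖x‖ ^ 2 := by rw [hx, ← mul_sum]; ring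

namespace Matrix.IsHermitian

variable {A B : Matrix n n 𝕜}

lemma inner_eigenvectorBasis_toEuclideanLin (hA : A.IsHermitian) (i : n)
    (x : EuclideanSpace 𝕜 n) :
    ⟪hA.eigenvectorBasis i, Matrix.toEuclideanLin A x⟫
      = hA.eigenvalues i * ⟪hA.eigenvectorBasis i, x⟫ := by
  have hb : Matrix.toEuclideanLin A (hA.eigenvectorBasis i)
      = (hA.eigenvalues i : 𝕜) • hA.eigenvectorBasis i := by
    ext j
    simpa [Matrix.toLpLin_apply] using congrFun (hA.mulVec_eigenvectorBasis i) j
  rw [← Matrix.isSymmetric_toEuclideanLin_iff.mpr hA, hb, inner_smul_left, conj_ofReal]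

lemma re_inner_toEuclideanLin_sub (hA : A.IsHermitian) (x : EuclideanSpace 𝕜 n) (μ : ℝ) :
    re ⟪x, Matrix.toEuclideanLin A x⟫ - μ * ‖x‖ ^ 2
      = ∑ i, (hA.eigenvalues i - μ) * ‖⟪hA.eigenvectorBasis i, x⟫‖ ^ 2 := by
  set b := hA.eigenvectorBasis
  rw [← b.sum_inner_mul_inner, ← b.sum_sq_norm_inner_right, map_sum, mul_sum, ← sum_sub_distrib]
  refine sum_congr rfl fun i _ => ?_
  rw [inner_eigenvectorBasis_toEuclideanLin, mul_left_comm, re_ofReal_mul, ← inner_conj_symm x,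
    RCLike.conj_mul, ← ofReal_pow, ofReal_re, sub_mul]

lemma re_inner_toEuclideanLin_le_of_mem_span (hA : A.IsHermitian) {μ : ℝ}
    {x : EuclideanSpace 𝕜 n}
    (hx : x ∈ Submodule.span 𝕜 (hA.eigenvectorBasis '' {i | hA.eigenvalues i ≤ μ})) :
    re ⟪x, Matrix.toEuclideanLin A x⟫ ≤ μ * ‖x‖ ^ 2 := by
  rw [← sub_nonpos, hA.re_inner_toEuclideanLin_sub]
  refine sum_nonpos fun i _ => ?_
  by_cases hi : hA.eigenvalues i ≤ μ
  · exact mul_nonpos_of_nonpos_of_nonneg (sub_nonpos.mpr hi) (sq_nonneg _)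
  · rw [hA.eigenvectorBasis.inner_eq_zero_of_mem_span hx hi]
    simp

lemma lt_re_inner_toEuclideanLin_of_mem_span (hA : A.IsHermitian) {μ : ℝ}
    {x : EuclideanSpace 𝕜 n}
    (hx : x ∈ Submodule.span 𝕜 (hA.eigenvectorBasis '' {i | μ < hA.eigenvalues i}))
    (hx0 : x ≠ 0) :
    μ * ‖x‖ ^ 2 < re ⟪x, Matrix.toEuclideanLin A x⟫ := by
  rw [← sub_pos, hA.re_inner_toEuclideanLin_sub]
  have hcoeff : ∀ i, hA.eigenvalues i ≤ μ → ⟪hA.eigenvectorBasis i, x⟫ = 0 :=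
    fun i hi => hA.eigenvectorBasis.inner_eq_zero_of_mem_span hx (not_lt.mpr hi)
  obtain ⟨j, hj⟩ : ∃ j, ⟪hA.eigenvectorBasis j, x⟫ ≠ 0 := by
    by_contra! h
    exact hx0 (by rw [← hA.eigenvectorBasis.sum_repr' x]; simp [h])
  refine sum_pos' (fun i _ => ?_) ⟨j, mem_univ j, ?_⟩
  · by_cases hi : hA.eigenvalues i ≤ μ
    · simp [hcoeff i hi]
    · exact mul_nonneg (sub_nonneg.mpr (not_le.mp hi).le) (sq_nonneg _)
  · have hμj : μ < hA.eigenvalues j := not_le.mp fun h => hj (hcoeff j h)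
    exact mul_pos (sub_pos.mpr hμj) (pow_pos (norm_pos_iff.mpr hj) 2)

lemma card_eigenvalues_le_le_of_re_inner_le (hA : A.IsHermitian) (hB : B.IsHermitian) {c : ℝ}
    (h : ∀ x, re ⟪x, Matrix.toEuclideanLin B x⟫ ≤ re ⟪x, Matrix.toEuclideanLin A x⟫ + c * ‖x‖ ^ 2)
    (μ : ℝ) : #{i | hA.eigenvalues i ≤ μ} ≤ #{i | hB.eigenvalues i ≤ μ + c} := by
  by_contra! hlt
  set V := Submodule.span 𝕜 (hA.eigenvectorBasis '' {i | hA.eigenvalues i ≤ μ})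
  set W := Submodule.span 𝕜 (hB.eigenvectorBasis '' {i | μ + c < hB.eigenvalues i})
  have hdim : Module.finrank 𝕜 (EuclideanSpace 𝕜 n) < Module.finrank 𝕜 V + Module.finrank 𝕜 W := by
    have hV := hA.eigenvectorBasis.finrank_span_image {i | hA.eigenvalues i ≤ μ}
    have hW := hB.eigenvectorBasis.finrank_span_image {i | μ + c < hB.eigenvalues i}
    rw [coe_filter_univ] at hV hW
    have := card_filter_add_card_filter_not (s := univ) (fun i => hB.eigenvalues i ≤ μ + c)
    simp only [not_le] at this
    rw [finrank_euclideanSpace, hV, hW, ← card_univ, ← this]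
    omega
  obtain ⟨x, ⟨hxV, hxW⟩, hx0⟩ := Submodule.exists_mem_inf_ne_zero_of_finrank_lt hdim
  have hAx := hA.re_inner_toEuclideanLin_le_of_mem_span hxV
  have hBx := hB.lt_re_inner_toEuclideanLin_of_mem_span hxW hx0
  linarith [h x]

lemma card_filter_le_eq_of_charpoly_eq_prod (hA : A.IsHermitian) {ι : Type*} [Fintype ι]
    {f : ι → ℝ} (hf : A.charpoly = ∏ i, (X - C (f i : 𝕜))) (μ : ℝ) :
    #{i | f i ≤ μ} = #{i | hA.eigenvalues i ≤ μ} := by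
  have hroots : A.charpoly.roots = univ.val.map fun i => (f i : 𝕜) := by
    rw [hf, roots_prod _ _ (prod_ne_zero_iff.mpr fun i _ => X_sub_C_ne_zero _)]
    simp
  have hmap : univ.val.map f = univ.val.map hA.eigenvalues := by
    refine Multiset.map_injective (ofReal_injective (K := 𝕜)) ?_
    rw [Multiset.map_map, Multiset.map_map, ← hA.roots_charpoly_eq_eigenvalues, hroots]
    rfl
  calc #{i | f i ≤ μ} = (univ.val.map f).countP (· ≤ μ) := by rw [Multiset.countP_map]; rfl
    _ = (univ.val.map hA.eigenvalues).countP (· ≤ μ) := by rw [hmap]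
    _ = #{i | hA.eigenvalues i ≤ μ} := by rw [Multiset.countP_map]; rfl

variable {ν : ℕ} {f g : Fin ν → ℝ}

lemma le_add_of_re_inner_le (hA : A.IsHermitian) (hB : B.IsHermitian)
    (hf : Monotone f) (hg : Monotone g)
    (hfA : A.charpoly = ∏ i, (X - C (f i : 𝕜))) (hgB : B.charpoly = ∏ i, (X - C (g i : 𝕜)))
    {c : ℝ}
    (h : ∀ x, re ⟪x, Matrix.toEuclideanLin B x⟫ ≤ re ⟪x, Matrix.toEuclideanLin A x⟫ + c * ‖x‖ ^ 2)
    (k : Fin ν) : g k ≤ f k + c := by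
  rw [hg.le_iff_lt_card_filter_le, hB.card_filter_le_eq_of_charpoly_eq_prod hgB]
  calc (k : ℕ) < #{i | f i ≤ f k} := (hf.le_iff_lt_card_filter_le k _).mp le_rfl
    _ = #{i | hA.eigenvalues i ≤ f k} := hA.card_filter_le_eq_of_charpoly_eq_prod hfA _
    _ ≤ _ := hA.card_eigenvalues_le_le_of_re_inner_le hB h _

lemma abs_sub_le_of_norm_inner_sub_le (hA : A.IsHermitian) (hB : B.IsHermitian)
    (hf : Monotone f) (hg : Monotone g)
    (hfA : A.charpoly = ∏ i, (X - C (f i : 𝕜))) (hgB : B.charpoly = ∏ i, (X - C (g i : 𝕜)))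
    {c : ℝ} (h : ∀ x, ‖⟪x, Matrix.toEuclideanLin (B - A) x⟫‖ ≤ c * ‖x‖ ^ 2)
    (k : Fin ν) : |g k - f k| ≤ c := by
  have hsplit (x : EuclideanSpace 𝕜 n) : re ⟪x, Matrix.toEuclideanLin B x⟫
      = re ⟪x, Matrix.toEuclideanLin A x⟫ + re ⟪x, Matrix.toEuclideanLin (B - A) x⟫ := by
    rw [map_sub, LinearMap.sub_apply, inner_sub_right, map_sub]
    ring
  have hre (x : EuclideanSpace 𝕜 n) := abs_le.mp ((abs_re_le_norm _).trans (h x))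
  rw [abs_sub_le_iff]
  constructor
  · linarith [hA.le_add_of_re_inner_le hB hf hg hfA hgB
      (fun x => by linarith [hsplit x, (hre x).2]) k]
  · linarith [hB.le_add_of_re_inner_le hA hg hf hgB hfA
      (fun x => by linarith [hsplit x, (hre x).1]) k]

end Matrix.IsHermitian

end Spectral

lemma edgePhase_inv {E : Type*} {d : ℕ} {inv : E → E} {τ : E → Fin d → ℤ}
    (hτ : ∀ e, τ (inv e) = - τ e) {α : E → ℝ} (hα : ∀ e, α (inv e) = - α e)
    (θ : Fin d → ℝ) (e : E) :
    edgePhase α τ θ (inv e) = - edgePhase α τ θ e := by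
  simp only [edgePhase, hα, hτ, Pi.neg_apply, Int.cast_neg, neg_mul, sum_neg_distrib, neg_add_rev]
  ring

section Graph

variable {E : Type*} [Fintype E] {d ν : ℕ} {o t : E → Fin ν} {inv : E → E}
  {τ : E → Fin d → ℤ} {Q : Fin ν → ℝ}

lemma sum_filter_origin_terminus_inv {M : Type*} [AddCommMonoid M]
    (hinv : Function.Involutive inv) (ho : ∀ e, o (inv e) = t e) (ht : ∀ e, t (inv e) = o e)
    (g : E → M) (v u : Fin ν) :
    ∑ e with o e = u ∧ t e = v, g (inv e) = ∑ e with o e = v ∧ t e = u, g e :=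
  sum_equiv hinv.toPerm (by simp [ho, ht, and_comm]) (by simp)

lemma sum_sum_filter_origin_terminus {M : Type*} [AddCommMonoid M] (g : E → M) (v : Fin ν) :
    ∑ u, ∑ e with o e = v ∧ t e = u, g e = ∑ e with o e = v, g e := by
  simp_rw [← filter_filter]
  exact sum_fiberwise _ t g

lemma fiberSch_isHermitian (hinv : Function.Involutive inv)
    (ho : ∀ e, o (inv e) = t e) (ht : ∀ e, t (inv e) = o e) (hτ : ∀ e, τ (inv e) = - τ e)
    {α : E → ℝ} (hα : ∀ e, α (inv e) = - α e) (Q : Fin ν → ℝ) (θ : Fin d → ℝ) :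
    (fiberSch o t τ α Q θ).IsHermitian := by
  refine Matrix.IsHermitian.ext fun v u => ?_
  have hexp : star (∑ e with o e = u ∧ t e = v, Complex.exp (Complex.I * edgePhase α τ θ e))
      = ∑ e with o e = v ∧ t e = u, Complex.exp (Complex.I * edgePhase α τ θ e) := by
    rw [← sum_filter_origin_terminus_inv hinv ho ht, star_sum]
    refine sum_congr rfl fun e _ => ?_
    rw [edgePhase_inv hτ hα, Complex.star_def, ← Complex.exp_conj]
    simp
  by_cases h : v = u
  · subst h
    simp [fiberSch, fiberLap, hexp]
  · simp [fiberSch, fiberLap, hexp, h, Ne.symm h]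

lemma fiberSch_sub_fiberSch_apply (α β : E → ℝ) (θ θ' : Fin d → ℝ) (v u : Fin ν) :
    (fiberSch o t τ β Q θ' - fiberSch o t τ α Q θ) v u
      = ∑ e with o e = v ∧ t e = u, (Complex.exp (Complex.I * edgePhase α τ θ e)
          - Complex.exp (Complex.I * edgePhase β τ θ' e)) := by
  simp only [fiberSch, fiberLap, Matrix.sub_apply, Matrix.add_apply, sum_sub_distrib]
  ring

lemma norm_inner_fiberSch_sub_le (hinv : Function.Involutive inv)
    (ho : ∀ e, o (inv e) = t e) (ht : ∀ e, t (inv e) = o e) {α β : E → ℝ}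
    {θ θ' : Fin d → ℝ} {w : E → ℝ}
    (hw : ∀ e, ‖Complex.exp (Complex.I * edgePhase α τ θ e)
      - Complex.exp (Complex.I * edgePhase β τ θ' e)‖ ≤ w e)
    (hwinv : ∀ e, w (inv e) = w e) {R : ℝ} (hR : ∀ v, ∑ e with o e = v, w e ≤ R)
    (x : EuclideanSpace ℂ (Fin ν)) :
    ‖inner ℂ x (Matrix.toEuclideanLin (fiberSch o t τ β Q θ' - fiberSch o t τ α Q θ) x)‖
      ≤ R * ‖x‖ ^ 2 := by
  refine Matrix.norm_inner_toEuclideanLin_le (K := fun v u => ∑ e with o e = v ∧ t e = u, w e)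
    (fun v u => ?_) (fun v => ?_) (fun u => ?_) x
  · rw [fiberSch_sub_fiberSch_apply]
    exact (norm_sum_le _ _).trans (sum_le_sum fun e _ => hw e)
  · rw [sum_sum_filter_origin_terminus]
    exact hR v
  · simp_rw [← sum_filter_origin_terminus_inv hinv ho ht w, hwinv]
    rw [sum_sum_filter_origin_terminus]
    exact hR u

lemma abs_sub_le_of_fiberSch (hinv : Function.Involutive inv)
    (ho : ∀ e, o (inv e) = t e) (ht : ∀ e, t (inv e) = o e) (hτ : ∀ e, τ (inv e) = - τ e)
    {α β : E → ℝ} (hα : ∀ e, α (inv e) = - α e) (hβ : ∀ e, β (inv e) = - β e)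
    {θ θ' : Fin d → ℝ} {f g : Fin ν → ℝ} (hf : Monotone f) (hg : Monotone g)
    (hfH : (fiberSch o t τ α Q θ).charpoly = ∏ i, (X - C ((f i : ℝ) : ℂ)))
    (hgH : (fiberSch o t τ β Q θ').charpoly = ∏ i, (X - C ((g i : ℝ) : ℂ)))
    {w : E → ℝ} (hw : ∀ e, ‖Complex.exp (Complex.I * edgePhase α τ θ e)
      - Complex.exp (Complex.I * edgePhase β τ θ' e)‖ ≤ w e)
    (hwinv : ∀ e, w (inv e) = w e) {R : ℝ} (hR : ∀ v, ∑ e with o e = v, w e ≤ R) (k : Fin ν) :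
    |g k - f k| ≤ R :=
  (fiberSch_isHermitian hinv ho ht hτ hα Q θ).abs_sub_le_of_norm_inner_sub_le
    (fiberSch_isHermitian hinv ho ht hτ hβ Q θ') hf hg hfH hgH
    (norm_inner_fiberSch_sub_le hinv ho ht hw hwinv hR) k

lemma abs_sub_le_of_fiberSch_magnetic (hinv : Function.Involutive inv)
    (ho : ∀ e, o (inv e) = t e) (ht : ∀ e, t (inv e) = o e) (hτ : ∀ e, τ (inv e) = - τ e)
    {α β : E → ℝ} (hα : ∀ e, α (inv e) = - α e) (hβ : ∀ e, β (inv e) = - β e)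
    {θ : Fin d → ℝ} {f g : Fin ν → ℝ} (hf : Monotone f) (hg : Monotone g)
    (hfH : (fiberSch o t τ α Q θ).charpoly = ∏ i, (X - C ((f i : ℝ) : ℂ)))
    (hgH : (fiberSch o t τ β Q θ).charpoly = ∏ i, (X - C ((g i : ℝ) : ℂ)))
    {R : ℝ} (hR : ∀ v, ∑ e with o e = v, 2 * |Real.sin ((β e - α e) / 2)| ≤ R) (k : Fin ν) :
    |g k - f k| ≤ R := by
  refine abs_sub_le_of_fiberSch hinv ho ht hτ hα hβ hf hg hfH hgH (fun e => ?_) (fun e => ?_) hR k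
  · have hphase : -((edgePhase α τ θ e - edgePhase β τ θ e) / 2) = (β e - α e) / 2 := by
      simp only [edgePhase]
      ring
    rw [Complex.norm_exp_I_mul_ofReal_sub_exp_I_mul_ofReal, ← abs_neg, ← Real.sin_neg, hphase]
  · rw [hα, hβ, show -β e - -α e = -(β e - α e) by ring, neg_div, Real.sin_neg, abs_neg]

lemma isBounded_range_of_fiberSch (hinv : Function.Involutive inv)
    (ho : ∀ e, o (inv e) = t e) (ht : ∀ e, t (inv e) = o e) (hτ : ∀ e, τ (inv e) = - τ e)
    {α : E → ℝ} (hα : ∀ e, α (inv e) = - α e) {lam : (Fin d → ℝ) → Fin ν → ℝ}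
    (hmono : ∀ θ, Monotone (lam θ))
    (hroots : ∀ θ, (fiberSch o t τ α Q θ).charpoly = ∏ i, (X - C ((lam θ i : ℝ) : ℂ)))
    (k : Fin ν) : Bornology.IsBounded (Set.range fun θ => lam θ k) := by
  refine (Metric.isBounded_closedBall (x := lam 0 k) (r := 2 * Fintype.card E)).subset
    (Set.range_subset_iff.mpr fun θ => ?_)
  rw [Metric.mem_closedBall, Real.dist_eq]
  refine abs_sub_le_of_fiberSch hinv ho ht hτ hα hα (hmono 0) (hmono θ) (hroots 0) (hroots θ)
    (w := fun _ => 2) (fun e => ?_) (fun _ => rfl) (fun v => ?_) k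
  · rw [Complex.norm_exp_I_mul_ofReal_sub_exp_I_mul_ofReal]
    linarith [Real.abs_sin_le_one ((edgePhase α τ 0 e - edgePhase α τ θ e) / 2)]
  · rw [sum_const, nsmul_eq_mul, mul_comm]
    gcongr
    exact_mod_cast card_le_univ _

end Graph

theorem band_length_variation_bound
    {d ν : ℕ} (hν : 1 ≤ ν)
    {E : Type*} [Fintype E] [DecidableEq E]
    (o t : E → Fin ν) (inv : E → E)
    (hinv : ∀ e, inv (inv e) = e)
    (ho : ∀ e, o (inv e) = t e) (ht : ∀ e, t (inv e) = o e)
    (τ : E → Fin d → ℤ) (hτ : ∀ e, τ (inv e) = - τ e)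
    (α αo : E → ℝ) (hα : ∀ e, α (inv e) = - α e) (hαo : ∀ e, αo (inv e) = - αo e)
    (S : Finset E)
    (hout : ∀ e, e ∉ S → inv e ∉ S → α e = 0 ∧ αo e = 0 ∧ τ e = 0)
    (Q : Fin ν → ℝ)
    -- eigenvalues of `H_α(θ)` with multiplicity, in increasing order
    (lam : (Fin d → ℝ) → Fin ν → ℝ)
    (hmono : ∀ θ, Monotone (lam θ))
    (hroots : ∀ θ, (fiberSch o t τ α Q θ).charpoly
      = ∏ n : Fin ν, (X - C ((lam θ n : ℝ) : ℂ)))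
    -- eigenvalues of `H_{α°}(θ)` with multiplicity, in increasing order
    (lamo : (Fin d → ℝ) → Fin ν → ℝ)
    (hmonoo : ∀ θ, Monotone (lamo θ))
    (hrootso : ∀ θ, (fiberSch o t τ αo Q θ).charpoly
      = ∏ n : Fin ν, (X - C ((lamo θ n : ℝ) : ℂ)))
    (Cst : ℝ)
    (hCst : Cst = 2 * Finset.univ.sup' ⟨⟨0, by omega⟩, Finset.mem_univ _⟩
      (fun u : Fin ν => ∑ e ∈ (S ∪ S.image inv).filter (fun e => o e = u),
        |Real.sin ((αo e - α e) / 2)|)) :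
    ∀ n : Fin ν,
      |((⨆ θ : Fin d → ℝ, lamo θ n) - (⨅ θ : Fin d → ℝ, lamo θ n))
        - ((⨆ θ : Fin d → ℝ, lam θ n) - (⨅ θ : Fin d → ℝ, lam θ n))| ≤ 2 * Cst := by
  intro n
  have hvanish : ∀ e ∉ S ∪ S.image inv, |Real.sin ((αo e - α e) / 2)| = 0 := by
    intro e he
    rw [mem_union, mem_image, not_or] at he
    obtain ⟨hα0, hαo0, -⟩ := hout e he.1 fun h => he.2 ⟨inv e, h, hinv e⟩
    simp [hα0, hαo0]
  have hrow (v : Fin ν) : ∑ e with o e = v, 2 * |Real.sin ((αo e - α e) / 2)| ≤ Cst := by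
    rw [hCst, ← mul_sum]
    gcongr
    calc ∑ e with o e = v, |Real.sin ((αo e - α e) / 2)|
        = ∑ e ∈ (S ∪ S.image inv).filter (fun e => o e = v), |Real.sin ((αo e - α e) / 2)| :=
          (sum_subset (filter_subset_filter _ (subset_univ _)) fun e he he' =>
            hvanish e fun h => he' (mem_filter.mpr ⟨h, (mem_filter.mp he).2⟩)).symm
      _ ≤ _ := le_sup' (fun u => ∑ e ∈ (S ∪ S.image inv).filter (fun e => o e = u),
          |Real.sin ((αo e - α e) / 2)|) (mem_univ v)
  refine abs_ciSup_sub_ciInf_sub_le (isBounded_range_of_fiberSch hinv ho ht hτ hα hmono hroots n)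
    fun θ => ?_
  exact abs_sub_le_of_fiberSch_magnetic hinv ho ht hτ hα hαo (hmono θ) (hmonoo θ) (hroots θ)
    (hrootso θ) hrow n
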